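/- Let p be a prime, q a positive integer divisible by p², l an integer with gcd(l,p) = 1, and n any integer. Then Σ_{b} e(l·b̄/q) = 0, where the sum runs over all b ∈ {1,…,q} with gcd(b,q) = 1 and b ≡ n (mod q/p), and b̄ ∈ {1,…,q} is the inverse of b modulo q. -/

import Mathlib

open Complex

/-- `e(z) = exp(2πiz)`. -/
noncomputable def eC (z : ℂ) : ℂ := Complex.exp (2 * Real.pi * Complex.I * z)

/-- The Kloosterman sum `Kl(m,n;c) = Σ_{x mod c, (x,c)=1} e((mx + nx*)/c)`,
where `x*` is the inverse of `x` modulo `c`. -/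
noncomputable def Kl (m n : ℤ) (c : ℕ) : ℂ :=
  ∑ x ∈ Finset.filter (fun x => Nat.gcd x c = 1) (Finset.Icc 1 c),
    eC ((((m * x + n * ((((x : ZMod c))⁻¹.val : ℕ) : ℤ) : ℤ) : ℝ) / c : ℝ))

/-!
The map `b ↦ b⁻¹` permutes the units of `ZMod q` and, with `d = q / p`, carries the units in the
class `n mod d` onto the units in a single class `c₀ mod d`, so the sum is
`∑ e(l c / q)` over the units `c ≡ c₀ (mod d)`. Since `p ∣ d`, the primes dividing `q` and `d`
coincide, so being a unit mod `q` only depends on the class mod `d`, and this set is invariant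
under `c ↦ c + d`. That translation multiplies every term by `e(l d / q) = e(l / p) ≠ 1`,
hence the sum vanishes.
-/

open Finset

theorem AddChar.sum_eq_zero_of_add_mem_iff {G R : Type*} [AddGroup G] [CommRing R]
    [NoZeroDivisors R] (ψ : AddChar G R) {s : Finset G} {k : G} (hs : ∀ y, y + k ∈ s ↔ y ∈ s)
    (hk : ψ k ≠ 1) : ∑ y ∈ s, ψ y = 0 := by
  have htranslate : ψ k * ∑ y ∈ s, ψ y = ∑ y ∈ s, ψ y := by
    rw [mul_sum]
    exact sum_equiv (Equiv.addRight k) (fun y => (hs y).symm)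
      (fun y _ => by rw [Equiv.coe_addRight, AddChar.map_add_eq_mul, mul_comm])
  have hfactor : (ψ k - 1) * ∑ y ∈ s, ψ y = 0 := by rw [sub_mul, htranslate, one_mul, sub_self]
  exact (mul_eq_zero.1 hfactor).resolve_left (sub_ne_zero.2 hk)

namespace ZMod

theorem sum_Icc_one_natCast {M : Type*} [AddCommMonoid M] (q : ℕ) [NeZero q]
    (f : ZMod q → M) : ∑ b ∈ Icc 1 q, f b = ∑ x, f x := by
  refine sum_nbij' (fun b => (b : ZMod q)) (fun x => (x - 1).val + 1) ?_ ?_ ?_ ?_ ?_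
  · intros; exact mem_univ _
  · intro x _
    exact mem_Icc.2 ⟨by omega, val_lt _⟩
  · intro b hb
    obtain ⟨c, rfl⟩ : ∃ c, b = c + 1 := ⟨b - 1, by grind⟩
    have hc : c < q := by grind
    simp [ZMod.val_natCast, Nat.mod_eq_of_lt hc]
  · intro x _
    simp
  · simp

theorem inv_inv_of_isUnit {n : ℕ} {x : ZMod n} (hx : IsUnit x) : x⁻¹⁻¹ = x :=
  ZMod.inv_eq_of_mul_eq_one _ _ _ (ZMod.inv_mul_of_unit x hx)

theorem castHom_inv_of_isUnit {m n : ℕ} (h : m ∣ n) {x : ZMod n} (hx : IsUnit x) :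
    castHom h (ZMod m) x⁻¹ = (castHom h (ZMod m) x)⁻¹ :=
  (ZMod.inv_eq_of_mul_eq_one _ _ _ (by rw [← map_mul, ZMod.mul_inv_of_unit x hx, map_one])).symm

theorem isUnit_castHom_iff {m n : ℕ} [NeZero n] (h : m ∣ n)
    (hprime : ∀ r, r.Prime → r ∣ n → r ∣ m) {x : ZMod n} :
    IsUnit (castHom h (ZMod m) x) ↔ IsUnit x := by
  rw [← ZMod.natCast_zmod_val x, map_natCast, ZMod.isUnit_iff_coprime, ZMod.isUnit_iff_coprime]
  refine ⟨fun hm => Nat.coprime_of_dvd fun r hr hrx hrn => ?_, fun hn => hn.coprime_dvd_right h⟩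
  exact hr.not_dvd_one (hm ▸ Nat.dvd_gcd hrx (hprime r hr hrn))

theorem sum_filter_isUnit_inv {M : Type*} [AddCommMonoid M] {n : ℕ} [NeZero n]
    (P : ZMod n → Prop) [DecidablePred P] (f : ZMod n → M) :
    ∑ x ∈ univ.filter (fun x => IsUnit x ∧ P x), f x⁻¹
      = ∑ y ∈ univ.filter (fun y => IsUnit y ∧ P y⁻¹), f y := by
  have hinv : ∀ {x : ZMod n}, IsUnit x → IsUnit x⁻¹ := fun {x} hx =>
    IsUnit.of_mul_eq_one x (ZMod.inv_mul_of_unit _ hx)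
  refine sum_nbij' (·⁻¹) (·⁻¹) ?_ ?_ ?_ ?_ ?_
  · intro x hx
    simp only [mem_filter, mem_univ, true_and] at hx ⊢
    exact ⟨hinv hx.1, (inv_inv_of_isUnit hx.1).symm ▸ hx.2⟩
  · intro y hy
    simp only [mem_filter, mem_univ, true_and] at hy ⊢
    exact ⟨hinv hy.1, hy.2⟩
  · intro x hx
    exact inv_inv_of_isUnit (mem_filter.1 hx).2.1
  · intro y hy
    exact inv_inv_of_isUnit (mem_filter.1 hy).2.1
  · intros
    rfl

theorem sum_filter_castHom_eq_zero_of_ne_one {R : Type*} [CommRing R] [NoZeroDivisors R]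
    {m n : ℕ} [NeZero n] (h : m ∣ n) (ψ : AddChar (ZMod n) R) (hψ : ψ m ≠ 1)
    (Q : ZMod m → Prop) [DecidablePred Q] :
    ∑ y ∈ univ.filter (fun y => Q (castHom h (ZMod m) y)), ψ y = 0 :=
  ψ.sum_eq_zero_of_add_mem_iff (fun y => by
    simp only [mem_filter, mem_univ, true_and, map_add, map_natCast, ZMod.natCast_self, add_zero])
    hψ

theorem stdAddChar_mul_natCast_ne_one {p d : ℕ} [NeZero (p * d)] {l : ℤ}
    (hl : ¬ (p : ℤ) ∣ l) : stdAddChar ((l : ZMod (p * d)) * (d : ZMod (p * d))) ≠ 1 := by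
  have hd : d ≠ 0 := right_ne_zero_of_mul (NeZero.ne (p * d))
  rw [← (stdAddChar (N := p * d)).map_zero_eq_one, injective_stdAddChar.ne_iff]
  intro h
  rw [← Int.cast_natCast, ← Int.cast_mul, ZMod.intCast_zmod_eq_zero_iff_dvd, Nat.cast_mul,
    mul_dvd_mul_iff_right (by exact_mod_cast hd)] at h
  exact hl h

end ZMod

theorem eC_intCast_div (q : ℕ) [NeZero q] (j : ℤ) :
    eC (((j : ℝ) : ℂ) / q) = ZMod.stdAddChar (j : ZMod q) := by
  rw [ZMod.stdAddChar_coe, eC]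
  push_cast
  ring_nf

theorem stmt10 (p q : ℕ) (hp : p.Prime) (hq : 0 < q) (hpq : p ^ 2 ∣ q)
    (l : ℤ) (hl : Int.gcd l p = 1) (n : ℤ) :
    ∑ b ∈ Finset.filter
        (fun b => Nat.gcd b q = 1 ∧ (b : ℤ) % ((q / p : ℕ) : ℤ) = n % ((q / p : ℕ) : ℤ))
        (Finset.Icc 1 q),
      eC (((l * ((((b : ZMod q))⁻¹.val : ℕ) : ℤ) : ℤ) : ℝ) / q) = 0 := by
  classical
  obtain ⟨d, rfl⟩ : p ∣ q := (dvd_pow_self p two_ne_zero).trans hpq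
  have hpd : p ∣ d := Nat.dvd_of_mul_dvd_mul_left hp.pos (by rwa [← sq])
  have : NeZero (p * d) := ⟨hq.ne'⟩
  have hpl : ¬ (p : ℤ) ∣ l := fun h => (Nat.prime_iff_prime_int.mp hp).not_isUnit
    ((Int.isCoprime_iff_gcd_eq_one.mpr hl).isUnit_of_dvd' h dvd_rfl)
  have hprime : ∀ r, r.Prime → r ∣ p * d → r ∣ d := fun r hr hrpd =>
    (hr.dvd_mul.1 hrpd).elim (fun hrp => (Nat.prime_dvd_prime_iff_eq hr hp).1 hrp ▸ hpd) id
  let π := ZMod.castHom (dvd_mul_left d p) (ZMod d)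
  let ψ := (ZMod.stdAddChar (N := p * d)).mulShift l
  rw [Nat.mul_div_cancel_left d hp.pos]
  calc _ = ∑ b ∈ (Icc 1 (p * d)).filter (fun b : ℕ => IsUnit (b : ZMod (p * d)) ∧ π b = n),
          ψ (b : ZMod (p * d))⁻¹ := by
        refine sum_congr (filter_congr fun b _ => ?_) fun b _ => ?_
        · rw [ZMod.isUnit_iff_coprime, map_natCast, ← ZMod.intCast_eq_intCast_iff',
            Int.cast_natCast]
        · rw [eC_intCast_div]
          simp [ψ]
    _ = ∑ x ∈ univ.filter (fun x => IsUnit x ∧ π x = n), ψ x⁻¹ := by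
        rw [sum_filter, sum_filter]
        exact ZMod.sum_Icc_one_natCast (p * d) fun x => if IsUnit x ∧ π x = n then ψ x⁻¹ else 0
    _ = ∑ y ∈ univ.filter (fun y => IsUnit y ∧ π y⁻¹ = n), ψ y :=
        ZMod.sum_filter_isUnit_inv _ _
    _ = ∑ y ∈ univ.filter (fun y => IsUnit (π y) ∧ (π y)⁻¹ = n), ψ y := by
        refine sum_congr (filter_congr fun y _ => ?_) fun _ _ => rfl
        rw [ZMod.isUnit_castHom_iff _ hprime]
        exact and_congr_right fun hy => by rw [ZMod.castHom_inv_of_isUnit _ hy]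
    _ = 0 := ZMod.sum_filter_castHom_eq_zero_of_ne_one _ ψ
        (ZMod.stdAddChar_mul_natCast_ne_one hpl) (fun z => IsUnit z ∧ z⁻¹ = n)
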